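/- For BDF3 applied to u' = λu with λ < 0 real, all three roots of (11/6 - λΔt)μ³ - 3μ² + (3/2)μ - 1/3 = 0 have modulus strictly less than 1 for every Δt > 0 (BDF3 is stable on the negative real axis). -/

import Mathlib

/-! The Cayley transform `z = (μ - 1) / (μ + 1)` maps `‖μ‖ ≥ 1` into the closed right half-plane
and turns `8 p(μ)` into `(μ + 1)³ q(z)`, where, with `a = 11/6 - λΔt > 11/6`,
`q(z) = (a + 29/6) z³ + (3a + 1/2) z² + (3a - 7/2) z + (a - 11/6)`.
The coefficients of `q` are positive and satisfy the Routh–Hurwitz condition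
`(3a + 1/2)(3a - 7/2) - (a + 29/6)(a - 11/6) = 8a² - 12a + 64/9 > 0`, so `q` has no root with
nonnegative real part. -/

open Complex

theorem cubic_ne_zero_of_re_nonneg {c₃ c₂ c₁ c₀ : ℝ} (h₃ : 0 < c₃) (h₂ : 0 < c₂) (h₀ : 0 < c₀)
    (hurwitz : c₃ * c₀ < c₂ * c₁) {z : ℂ} (hz : 0 ≤ z.re) :
    (c₃ : ℂ) * z ^ 3 + c₂ * z ^ 2 + c₁ * z + c₀ ≠ 0 := by
  -- With `r = c₃ / c₂` and `d = c₁ - r c₀ > 0` the cubic is `(c₂ z² + c₀)(1 + r z) + d z`, so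
  -- dividing by `z (1 + r z)` gives `c₂ z + c₀ / z + d / (1 + r z)`, whose real part is positive.
  obtain ⟨r, hr, hrc⟩ : ∃ r : ℝ, 0 < r ∧ r * c₂ = c₃ :=
    ⟨c₃ / c₂, div_pos h₃ h₂, div_mul_cancel₀ _ h₂.ne'⟩
  obtain ⟨d, hd, hdc⟩ : ∃ d : ℝ, 0 < d ∧ d = c₁ - r * c₀ := ⟨_, by nlinarith, rfl⟩
  intro h
  have hz₀ : z ≠ 0 := by
    rintro rfl
    exact h₀.ne' (by simpa using h)
  have hw : 1 + r * z ≠ 0 := by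
    intro hw₀
    have hre := congrArg re hw₀
    simp only [add_re, one_re, re_ofReal_mul, zero_re] at hre
    nlinarith
  have hfactor : (c₃ : ℂ) * z ^ 3 + c₂ * z ^ 2 + c₁ * z + c₀
      = z * (1 + r * z) * (c₂ * z + c₀ * z⁻¹ + d * (1 + r * z)⁻¹) := by
    have hrc' : (r : ℂ) * c₂ = c₃ := by exact_mod_cast hrc
    have hdc' : (d : ℂ) = c₁ - r * c₀ := by exact_mod_cast hdc
    linear_combination -z ^ 3 * hrc' - z * hdc' - (1 + r * z) * c₀ * mul_inv_cancel₀ hz₀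
      - d * z * mul_inv_cancel₀ hw
  have hsum : c₂ * z + c₀ * z⁻¹ + d * (1 + r * z)⁻¹ = 0 := by
    rw [hfactor] at h
    simpa [hz₀, hw] using h
  have hre := congrArg re hsum
  simp only [add_re, re_ofReal_mul, inv_re, one_re, zero_re] at hre
  have hd_term : 0 < d * ((1 + r * z.re) / normSq (1 + r * z)) :=
    mul_pos hd (div_pos (by nlinarith) (normSq_pos.mpr hw))
  have hc₀_term : 0 ≤ c₀ * (z.re / normSq z) := mul_nonneg h₀.le (div_nonneg hz (normSq_nonneg z))
  nlinarith

theorem re_sub_one_div_add_one_nonneg {μ : ℂ} (hμ : 1 ≤ ‖μ‖) : 0 ≤ ((μ - 1) / (μ + 1)).re := by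
  have hsq : 1 ≤ μ.re ^ 2 + μ.im ^ 2 := by
    have hnorm := Complex.sq_norm μ
    rw [normSq_apply] at hnorm
    nlinarith
  rw [div_re, ← add_div]
  apply div_nonneg _ (normSq_nonneg _)
  simp only [sub_re, add_re, one_re, sub_im, add_im, one_im, sub_zero, add_zero]
  nlinarith

/-- Stability of BDF3 on the negative real axis: for `λ < 0` and
any `Δt > 0`, all three (complex) roots of
`(11/6 - λΔt) μ³ - 3μ² + (3/2)μ - 1/3 = 0` have modulus strictly less than 1. -/
theorem stmt_16 (lam Δt : ℝ) (hlam : lam < 0) (hΔt : 0 < Δt) :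
    ∀ μ : ℂ, ((11 / 6 - lam * Δt : ℝ) : ℂ) * μ ^ 3 - 3 * μ ^ 2 + (3 / 2) * μ - 1 / 3 = 0 →
      ‖μ‖ < 1 := by
  intro μ hμ
  by_contra! hμ₁
  have ha : 11 / 6 < 11 / 6 - lam * Δt := by nlinarith
  generalize 11 / 6 - lam * Δt = a at hμ ha
  have hμ' : μ + 1 ≠ 0 := by
    intro h
    rw [eq_neg_of_add_eq_zero_left h] at hμ
    have : (a : ℂ) = -29 / 6 := by linear_combination -hμ
    have : a = -29 / 6 := by exact_mod_cast this
    linarith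
  refine cubic_ne_zero_of_re_nonneg (c₁ := 3 * a - 7 / 2) (by linarith : 0 < a + 29 / 6)
    (by linarith : 0 < 3 * a + 1 / 2) (by linarith : 0 < a - 11 / 6) (by nlinarith)
    (re_sub_one_div_add_one_nonneg hμ₁) ?_
  field_simp
  push_cast
  linear_combination 8 * hμ
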